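/- (Sub-optimality bound for mixture-of-agents decoding, abstract form) Let T be a finite nonempty set, ρ_ref a fully supported distribution on T, r_target : T → ℝ, and r_1,…,r_K : T → ℝ with associated policies ρ_1,…,ρ_K, where each ρ_j maximizes ρ ↦ E_ρ[r_j] − β KL(ρ‖ρ_ref) for some β > 0. Let ρ* maximize ρ ↦ E_ρ[r_target] − β KL(ρ‖ρ_ref). Suppose the algorithm's value satisfies J_alg ≥ J_j := E_{ρ_j}[r_target] − α c_j for every j, where c_j = KL(π_j‖π_ref) ≥ 0 are token-level KL terms with α > 0, and the algorithm's Q-value satisfies Q_alg = J_alg + α c_alg with c_alg ≥ 0. Then Q* − Q_alg ≤ min over j of [ 2 δ_{*j} + α c_j + β KL(ρ*‖ρ_ref) ], where Q* = E_{ρ*}[r_target], Q_alg is the algorithm's Q-value, and δ_{*j} = max_τ |r_target(τ) − r_j(τ)|. -/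

import Mathlib

/-!
Fix an agent `j`. Replacing `r_target` by `r_j` changes any expectation by at most `δ_{*j}`,
so the optimality of `ρ_j` for `r_j`, tested against `ρ*`, gives
`E_{ρ*}[r_target] ≤ E_{ρ_j}[r_target] + 2 δ_{*j} + β KL(ρ*‖ρ_ref) - β KL(ρ_j‖ρ_ref)`.
Dropping the nonnegative term `β KL(ρ_j‖ρ_ref)`, and using `J_alg ≥ J_j` and `α c_alg ≥ 0`,
bounds `Q* - Q_alg` by the `j`-th term of the minimum.
-/

open Finset

noncomputable def KL {T : Type*} [Fintype T] (p q : T → ℝ) : ℝ :=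
  ∑ τ, p τ * Real.log (p τ / q τ)

lemma sub_le_mul_log_div {p q : ℝ} (hp : 0 ≤ p) (hq : 0 < q) :
    p - q ≤ p * Real.log (p / q) := by
  have h := mul_le_mul_of_nonneg_left (Real.self_sub_one_le_mul_log (div_nonneg hp hq.le)) hq.le
  rwa [mul_sub, mul_div_cancel₀ _ hq.ne', mul_one, ← mul_assoc, mul_div_cancel₀ _ hq.ne'] at h

lemma KL_nonneg {T : Type*} [Fintype T] {p q : T → ℝ} (hp : ∀ τ, 0 ≤ p τ) (hq : ∀ τ, 0 < q τ)
    (hsum : ∑ τ, p τ = ∑ τ, q τ) : 0 ≤ KL p q := by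
  have h := sum_le_sum fun τ (_ : τ ∈ univ) => sub_le_mul_log_div (hp τ) (hq τ)
  rwa [sum_sub_distrib, hsum, sub_self] at h

lemma abs_sum_mul_sub_sum_mul_le_sup' {T : Type*} [Fintype T] [Nonempty T] {p : T → ℝ}
    (hp : ∀ τ, 0 ≤ p τ) (hp1 : ∑ τ, p τ = 1) (f g : T → ℝ) :
    |∑ τ, p τ * f τ - ∑ τ, p τ * g τ| ≤ univ.sup' univ_nonempty fun τ => |f τ - g τ| := by
  set M := univ.sup' univ_nonempty fun τ => |f τ - g τ|
  calc |∑ τ, p τ * f τ - ∑ τ, p τ * g τ| = |∑ τ, p τ * (f τ - g τ)| := by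
        simp only [mul_sub, sum_sub_distrib]
    _ ≤ ∑ τ, |p τ * (f τ - g τ)| := abs_sum_le_sum_abs _ _
    _ ≤ ∑ τ, p τ * M := by
        gcongr with τ
        rw [abs_mul, abs_of_nonneg (hp τ)]
        exact mul_le_mul_of_nonneg_left (le_sup' (fun τ => |f τ - g τ|) (mem_univ τ)) (hp τ)
    _ = M := by rw [← sum_mul, hp1, one_mul]

theorem suboptimality_bound_mixture_of_agents_general
    {T : Type*} [Fintype T] [Nonempty T]
    (ρref : T → ℝ) (href : ∀ τ, 0 < ρref τ) (hrefsum : ∑ τ, ρref τ = 1)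
    (rtarget : T → ℝ) {K : ℕ} (hK : 0 < K)
    (r : Fin K → T → ℝ) (ρ : Fin K → T → ℝ) (β : ℝ) (hβ : 0 < β)
    (hρ0 : ∀ j τ, 0 ≤ ρ j τ) (hρ1 : ∀ j, ∑ τ, ρ j τ = 1)
    (hρmax : ∀ (j : Fin K) (σ : T → ℝ), (∀ τ, 0 ≤ σ τ) → (∑ τ, σ τ = 1) →
      (∀ τ, ρref τ = 0 → σ τ = 0) →
      (∑ τ, σ τ * r j τ) - β * KL σ ρref ≤ (∑ τ, ρ j τ * r j τ) - β * KL (ρ j) ρref)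
    (ρstar : T → ℝ) (hρstar0 : ∀ τ, 0 ≤ ρstar τ) (hρstar1 : ∑ τ, ρstar τ = 1)
    (hρstarac : ∀ τ, ρref τ = 0 → ρstar τ = 0)
    (α : ℝ) (hα : 0 < α) (c : Fin K → ℝ)
    (Jalg Qalg calg : ℝ) (hcalg : 0 ≤ calg)
    (hdom : ∀ j : Fin K, (∑ τ, ρ j τ * rtarget τ) - α * c j ≤ Jalg)
    (hQalg : Qalg = Jalg + α * calg)
    (Qstar : ℝ) (hQstar : Qstar = ∑ τ, ρstar τ * rtarget τ)
    (δ : Fin K → ℝ)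
    (hδ : ∀ j, δ j = Finset.univ.sup' Finset.univ_nonempty
      (fun τ => |rtarget τ - r j τ|)) :
    Qstar - Qalg ≤
      Finset.univ.inf' (Finset.univ_nonempty_iff.mpr (Fin.pos_iff_nonempty.mp hK))
        (fun j => 2 * δ j + α * c j + β * KL ρstar ρref) := by
  refine le_inf' _ _ fun j _ => ?_
  have hopt := hρmax j ρstar hρstar0 hρstar1 hρstarac
  have hKLj : 0 ≤ KL (ρ j) ρref := KL_nonneg (hρ0 j) href (by rw [hρ1 j, hrefsum])
  have hstar := (abs_le.mp (abs_sum_mul_sub_sum_mul_le_sup' hρstar0 hρstar1 rtarget (r j))).2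
  have hagent := (abs_le.mp (abs_sum_mul_sub_sum_mul_le_sup' (hρ0 j) (hρ1 j) rtarget (r j))).1
  rw [← hδ j] at hstar hagent
  have hvalue := hdom j
  linarith [mul_nonneg hα.le hcalg, mul_nonneg hβ.le hKLj]

theorem suboptimality_bound_mixture_of_agents
    {T : Type*} [Fintype T] [Nonempty T]
    (ρref : T → ℝ) (href : ∀ τ, 0 < ρref τ) (hrefsum : ∑ τ, ρref τ = 1)
    (rtarget : T → ℝ) {K : ℕ} (hK : 0 < K)
    (r : Fin K → T → ℝ) (ρ : Fin K → T → ℝ) (β : ℝ) (hβ : 0 < β)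
    (hρ0 : ∀ j τ, 0 ≤ ρ j τ) (hρ1 : ∀ j, ∑ τ, ρ j τ = 1)
    (hρac : ∀ j τ, ρref τ = 0 → ρ j τ = 0)
    (hρmax : ∀ (j : Fin K) (σ : T → ℝ), (∀ τ, 0 ≤ σ τ) → (∑ τ, σ τ = 1) →
      (∀ τ, ρref τ = 0 → σ τ = 0) →
      (∑ τ, σ τ * r j τ) - β * KL σ ρref ≤ (∑ τ, ρ j τ * r j τ) - β * KL (ρ j) ρref)
    (ρstar : T → ℝ) (hρstar0 : ∀ τ, 0 ≤ ρstar τ) (hρstar1 : ∑ τ, ρstar τ = 1)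
    (hρstarac : ∀ τ, ρref τ = 0 → ρstar τ = 0)
    (hρstarmax : ∀ σ : T → ℝ, (∀ τ, 0 ≤ σ τ) → (∑ τ, σ τ = 1) →
      (∀ τ, ρref τ = 0 → σ τ = 0) →
      (∑ τ, σ τ * rtarget τ) - β * KL σ ρref ≤
        (∑ τ, ρstar τ * rtarget τ) - β * KL ρstar ρref)
    (α : ℝ) (hα : 0 < α) (c : Fin K → ℝ) (hc : ∀ j, 0 ≤ c j)
    (Jalg Qalg calg : ℝ) (hcalg : 0 ≤ calg)
    (hdom : ∀ j : Fin K, (∑ τ, ρ j τ * rtarget τ) - α * c j ≤ Jalg)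
    (hQalg : Qalg = Jalg + α * calg)
    (Qstar : ℝ) (hQstar : Qstar = ∑ τ, ρstar τ * rtarget τ)
    (δ : Fin K → ℝ)
    (hδ : ∀ j, δ j = Finset.univ.sup' Finset.univ_nonempty
      (fun τ => |rtarget τ - r j τ|)) :
    Qstar - Qalg ≤
      Finset.univ.inf' (Finset.univ_nonempty_iff.mpr (Fin.pos_iff_nonempty.mp hK))
        (fun j => 2 * δ j + α * c j + β * KL ρstar ρref) :=
  suboptimality_bound_mixture_of_agents_general ρref href hrefsum rtarget hK r ρ β hβ hρ0 hρ1 hρmax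
    ρstar hρstar0 hρstar1 hρstarac α hα c Jalg Qalg calg hcalg hdom hQalg Qstar hQstar δ hδ
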